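/- arXiv:1202.5536 — 3 statements merged into one kernel-verified Lean document; each statement's English description precedes it below -/
import Mathlib

section
/- The function g(c) = (1/c) * log(cosh(c)) is strictly increasing on (0, ∞) and its range is the interval (0, 1). -/
/-!
`log ∘ cosh` is strictly convex, since its derivative `tanh` is strictly increasing, and it
vanishes at `0`; hence `g(c) = log (cosh c) / c`, the slope of its secant through the origin,
is strictly increasing. The bounds `c - log 2 ≤ log (cosh c) < c` for `c > 0` put `g` in
`(0, 1)` and give `g → 1` at infinity, while `g → (log ∘ cosh)'(0) = 0` at `0⁺`; the
intermediate value theorem then shows that every value in `(0, 1)` is attained.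
-/

open Filter Set Topology Real

theorem StrictConvexOn.strictMonoOn_div_of_map_zero {𝕜 : Type*} [Field 𝕜] [LinearOrder 𝕜]
    [IsStrictOrderedRing 𝕜] {s : Set 𝕜} {f : 𝕜 → 𝕜} (hf : StrictConvexOn 𝕜 s f) (h0 : 0 ∈ s)
    (hf0 : f 0 = 0) : StrictMonoOn (fun x => f x / x) (s \ {0}) := by
  intro x hx y hy hxy
  simpa [hf0] using hf.secant_strict_mono h0 hx.1 hy.1 hx.2 hy.2 hxy

theorem Ioo_subset_image_Ioi_of_tendsto {α δ : Type*} [ConditionallyCompleteLinearOrder α]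
    [TopologicalSpace α] [OrderTopology α] [DenselyOrdered α] [NoMaxOrder α] [LinearOrder δ]
    [TopologicalSpace δ] [OrderClosedTopology δ] {f : α → δ} {a : α} {l u : δ}
    (hf : ContinuousOn f (Ioi a)) (hl : Tendsto f (𝓝[>] a) (𝓝 l)) (hu : Tendsto f atTop (𝓝 u)) :
    Ioo l u ⊆ f '' Ioi a := by
  intro y ⟨hly, hyu⟩
  have : Nonempty α := ⟨a⟩
  obtain ⟨b, hby, hb⟩ := ((hl.eventually (eventually_lt_nhds hly)).and self_mem_nhdsWithin).exists
  obtain ⟨c, hyc, hc⟩ :=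
    ((hu.eventually (eventually_gt_nhds hyu)).and (eventually_gt_atTop a)).exists
  exact isPreconnected_Ioi.intermediate_value hb hc hf ⟨hby.le, hyc.le⟩

namespace Real

theorem tanh_strictMono : StrictMono tanh := by
  intro x y hxy
  rw [tanh_eq_sinh_div_cosh, tanh_eq_sinh_div_cosh, div_lt_div_iff₀ (cosh_pos x) (cosh_pos y)]
  have h := sinh_pos_iff.2 (sub_pos.2 hxy)
  rw [sinh_sub] at h
  linarith

theorem hasDerivAt_log_cosh (x : ℝ) : HasDerivAt (fun y => log (cosh y)) (tanh x) x := by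
  simpa [tanh_eq_sinh_div_cosh] using (hasDerivAt_cosh x).log (cosh_pos x).ne'

theorem continuous_log_cosh : Continuous fun x => log (cosh x) :=
  continuous_cosh.log fun x => (cosh_pos x).ne'

theorem strictConvexOn_log_cosh : StrictConvexOn ℝ univ (fun x => log (cosh x)) := by
  refine StrictMono.strictConvexOn_univ_of_deriv continuous_log_cosh ?_
  rw [show deriv (fun x => log (cosh x)) = tanh from funext fun x => (hasDerivAt_log_cosh x).deriv]
  exact tanh_strictMono

theorem log_cosh_pos {x : ℝ} (hx : x ≠ 0) : 0 < log (cosh x) :=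
  log_pos (one_lt_cosh.2 hx)

theorem log_cosh_lt_self {x : ℝ} (hx : 0 < x) : log (cosh x) < x := by
  have hcosh : cosh x < exp x := by
    have := exp_lt_exp.2 (neg_lt_self hx)
    rw [cosh_eq]
    linarith
  simpa using log_lt_log (cosh_pos x) hcosh

theorem self_sub_log_two_le_log_cosh (x : ℝ) : x - log 2 ≤ log (cosh x) := by
  have hcosh : exp x / 2 ≤ cosh x := by
    have := (exp_pos (-x)).le
    rw [cosh_eq]
    linarith
  simpa [log_div (exp_pos x).ne'] using log_le_log (by positivity) hcosh

theorem tendsto_log_cosh_div_nhdsGT_zero :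
    Tendsto (fun x => log (cosh x) / x) (𝓝[>] 0) (𝓝 0) := by
  simpa [div_eq_inv_mul] using (hasDerivAt_log_cosh 0).tendsto_slope_zero_right

theorem tendsto_log_cosh_div_atTop : Tendsto (fun x => log (cosh x) / x) atTop (𝓝 1) := by
  have hlower : Tendsto (fun x : ℝ => 1 - log 2 / x) atTop (𝓝 1) := by
    simpa using tendsto_const_nhds.sub
      (tendsto_const_nhds.div_atTop tendsto_id : Tendsto (fun x : ℝ => log 2 / x) atTop (𝓝 0))
  refine tendsto_of_tendsto_of_tendsto_of_le_of_le' hlower tendsto_const_nhds ?_ ?_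
  · filter_upwards [eventually_gt_atTop 0] with x hx
    rw [one_sub_div hx.ne']
    exact div_le_div_of_nonneg_right (self_sub_log_two_le_log_cosh x) hx.le
  · filter_upwards [eventually_gt_atTop 0] with x hx
    exact (div_le_one hx).2 (log_cosh_lt_self hx).le

end Real

theorem stmt_1 :
    StrictMonoOn (fun c : ℝ => Real.log (Real.cosh c) / c) (Set.Ioi 0) ∧
    (fun c : ℝ => Real.log (Real.cosh c) / c) '' (Set.Ioi 0) = Set.Ioo 0 1 := by
  refine ⟨(strictConvexOn_log_cosh.strictMonoOn_div_of_map_zero (mem_univ 0) (by simp)).mono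
    fun x hx => ⟨mem_univ x, hx.ne'⟩, Subset.antisymm ?_ ?_⟩
  · rintro _ ⟨x, hx, rfl⟩
    exact ⟨div_pos (log_cosh_pos hx.ne') hx, (div_lt_one hx).2 (log_cosh_lt_self hx)⟩
  · refine Ioo_subset_image_Ioi_of_tendsto ?_ tendsto_log_cosh_div_nhdsGT_zero
      tendsto_log_cosh_div_atTop
    exact continuous_log_cosh.continuousOn.div continuousOn_id fun x hx => hx.ne'
end

section
/- Let Z be the number of fixed points of a uniformly random permutation of {1, ..., k}, and let c ≥ 0. Then E[exp(cZ)] ≤ exp(e^c - 1) + ((k+1)/((k/2+1)!)) · exp(c·k), assuming k is even. -/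
/-!
Write `x = e^c - 1`. Then `exp (c Z) = ∏ i, (1 + x [σ i = i])`; expanding the product over subsets
`t` and averaging over `σ`, the permutations fixing `t` pointwise number `(k - #t)!`, so
`E exp (c Z) = ∑_{m ≤ k} (k choose m) (k - m)! x^m / k! = ∑_{m ≤ k} x^m / m!`, a partial sum of
the exponential series of `x ≥ 0`, hence at most `exp x`.
-/

open Finset

variable {α : Type*} [Fintype α] [DecidableEq α]

theorem Equiv.Perm.card_filter_forall_mem_fixed (s : Finset α) :
    #{σ : Equiv.Perm α | ∀ i ∈ s, σ i = i} = (Fintype.card α - #s).factorial := by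
  rw [← Fintype.card_subtype]
  have fixing_equiv : {σ : Equiv.Perm α // ∀ i ∈ s, σ i = i}
      ≃ {σ : Equiv.Perm α // ∀ a, ¬a ∉ s → σ a = a} :=
    Equiv.subtypeEquivRight fun σ => by simp only [not_not]
  rw [Fintype.card_congr (fixing_equiv.trans (Equiv.Perm.subtypeEquivSubtypePerm _).symm),
    Fintype.card_perm, Fintype.card_subtype_compl, Fintype.card_coe]

theorem Equiv.Perm.sum_pow_card_fixed {R : Type*} [CommRing R] (y : R) :
    ∑ σ : Equiv.Perm α, y ^ #{i | σ i = i}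
      = ∑ m ∈ range (Fintype.card α + 1),
          ((Fintype.card α).choose m * (Fintype.card α - m).factorial : R) * (y - 1) ^ m := by
  have pow_eq_sum_subsets (σ : Equiv.Perm α) : y ^ #{i | σ i = i}
      = ∑ t ∈ univ.powerset, if ∀ i ∈ t, σ i = i then (y - 1) ^ #t else 0 := by
    calc y ^ #{i | σ i = i} = ∏ i, ((if σ i = i then y - 1 else 0) + 1) := by
          rw [← prod_const, prod_filter]
          exact prod_congr rfl fun i _ => by split_ifs <;> ring
      _ = _ := by simp only [prod_add_one, prod_ite_zero, prod_const]
  simp only [pow_eq_sum_subsets]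
  rw [sum_comm]
  simp only [sum_ite, sum_const_zero, add_zero, sum_const, nsmul_eq_mul,
    Equiv.Perm.card_filter_forall_mem_fixed]
  rw [sum_powerset_apply_card (fun m => ((Fintype.card α - m).factorial : R) * (y - 1) ^ m)]
  simp only [card_univ, nsmul_eq_mul, mul_assoc]

theorem Equiv.Perm.sum_pow_card_fixed_div_factorial {K : Type*} [Field K] [CharZero K] (y : K) :
    (∑ σ : Equiv.Perm α, y ^ #{i | σ i = i}) / (Fintype.card α).factorial
      = ∑ m ∈ range (Fintype.card α + 1), (y - 1) ^ m / m.factorial := by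
  rw [Equiv.Perm.sum_pow_card_fixed, sum_div]
  refine sum_congr rfl fun m hm => ?_
  have hmn : m ≤ Fintype.card α := Nat.lt_succ_iff.mp (mem_range.mp hm)
  have choose_mul : ((Fintype.card α).choose m * m.factorial * (Fintype.card α - m).factorial : K)
      = (Fintype.card α).factorial := by
    exact_mod_cast Nat.choose_mul_factorial_mul_factorial hmn
  rw [div_eq_div_iff (Nat.cast_ne_zero.mpr (Nat.factorial_ne_zero _))
    (Nat.cast_ne_zero.mpr (Nat.factorial_ne_zero _)), ← choose_mul]
  ring

theorem stmt_12_general (k : ℕ) (c : ℝ) (hc : 0 ≤ c) :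
    (∑ σ : Equiv.Perm (Fin k),
        Real.exp (c * (univ.filter fun i => σ i = i).card)) / (Nat.factorial k)
      ≤ Real.exp (Real.exp c - 1)
          + ((k + 1 : ℝ) / Nat.factorial (k / 2 + 1)) * Real.exp (c * k) := by
  have exp_sub_one_nonneg : 0 ≤ Real.exp c - 1 := by linarith [Real.one_le_exp hc]
  calc (∑ σ : Equiv.Perm (Fin k), Real.exp (c * #{i | σ i = i})) / k.factorial
      = (∑ σ : Equiv.Perm (Fin k), Real.exp c ^ #{i | σ i = i})
          / (Fintype.card (Fin k)).factorial := by
        simp only [mul_comm c, Real.exp_nat_mul, Fintype.card_fin]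
    _ = ∑ m ∈ range (k + 1), (Real.exp c - 1) ^ m / m.factorial := by
        rw [Equiv.Perm.sum_pow_card_fixed_div_factorial, Fintype.card_fin]
    _ ≤ Real.exp (Real.exp c - 1) := Real.sum_le_exp_of_nonneg exp_sub_one_nonneg _
    _ ≤ _ := le_add_of_nonneg_right (by positivity)

/-- MGF bound for the number `Z` of fixed points of a uniform random permutation of
`{1,…,k}` with `k` even: `E exp(cZ) ≤ exp(e^c - 1) + ((k+1)/(k/2+1)!) exp(ck)`. -/
theorem stmt_12 (k : ℕ) (hk : 0 < k) (hke : Even k) (c : ℝ) (hc : 0 ≤ c) :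
    (∑ σ : Equiv.Perm (Fin k),
        Real.exp (c * (univ.filter fun i => σ i = i).card)) / (Nat.factorial k)
      ≤ Real.exp (Real.exp c - 1)
          + ((k + 1 : ℝ) / Nat.factorial (k / 2 + 1)) * Real.exp (c * k) :=
  stmt_12_general k c hc
end

section
/- Let S and S' be independent uniformly random subsets of size k of {1, ..., n} with 2k ≤ n, and let Z = |S ∩ S'|. Then Z is stochastically dominated by a Binomial(k, k/(n-k)) random variable; i.e., for every t, P(Z ≥ t) ≤ P(Bin(k, k/(n-k)) ≥ t). -/
/-! Counting pairs by their first set, `P(|S ∩ S'| ≥ t)` is the normalized upper tail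
`∑_{j ≥ t} h_j / ∑_j h_j` of the hypergeometric weights `h_j = C(k,j) C(n-k,k-j)`, and the binomial
tail is `∑_{j ≥ t} b_j / ∑_j b_j` with `b_j = C(k,j) k^j (n-2k)^(k-j)`, whose total is `(n-k)^k`.
Since `(n-2k) C(n-k,r) ≤ k C(n-k,r+1)` for `r < k`, the likelihood ratio `h_j / b_j` is
nonincreasing in `j`, and a nonincreasing likelihood ratio forces the upper tails of `h` to be
at most those of `b`. -/

open Finset

def hypergeomWeight (n k j : ℕ) : ℕ := k.choose j * (n - k).choose (k - j)

def binomialWeight (n k j : ℕ) : ℕ := k.choose j * (k ^ j * (n - 2 * k) ^ (k - j))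

section Counting

variable {α : Type*} [Fintype α] [DecidableEq α]

theorem card_filter_card_inter_eq (A : Finset α) {j k : ℕ} (hjk : j ≤ k) :
    #(univ.filter fun B : Finset α => #B = k ∧ #(A ∩ B) = j) =
      (#A).choose j * (Fintype.card α - #A).choose (k - j) := by
  rw [← card_compl, ← card_powersetCard, ← card_powersetCard, ← card_product]
  refine card_bij' (fun B _ => (A ∩ B, B \ A)) (fun p _ => p.1 ∪ p.2) ?_ ?_ ?_ ?_
  · intro B hB
    obtain ⟨hBk, hABj⟩ := (mem_filter_univ _).1 hB
    simp only [mem_product, mem_powersetCard]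
    refine ⟨⟨inter_subset_left, hABj⟩, fun x => by simp +contextual, ?_⟩
    rw [card_sdiff, hBk, hABj]
  · rintro ⟨C, D⟩ hCD
    simp only [mem_product, mem_powersetCard, subset_compl_iff_disjoint_right] at hCD
    obtain ⟨⟨hCA, rfl⟩, hDA, hD⟩ := hCD
    have hA : A ∩ (C ∪ D) = C := by
      rw [inter_union_distrib_left, inter_eq_right.2 hCA, disjoint_iff_inter_eq_empty.1 hDA.symm,
        union_empty]
    rw [mem_filter_univ, hA, card_union_of_disjoint (hDA.symm.mono_left hCA), hD]
    omega
  · intro B _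
    rw [union_comm, inter_comm, sdiff_union_inter]
  · rintro ⟨C, D⟩ hCD
    simp only [mem_product, mem_powersetCard, subset_compl_iff_disjoint_right,
      disjoint_left] at hCD
    ext x <;> grind

theorem card_filter_le_card_inter (A : Finset α) (k t : ℕ) :
    #(univ.filter fun B : Finset α => #B = k ∧ t ≤ #(A ∩ B)) =
      ∑ j ∈ Icc t k, (#A).choose j * (Fintype.card α - #A).choose (k - j) := by
  rw [card_eq_sum_card_fiberwise (f := fun B => #(A ∩ B)) (t := Icc t k)]
  · refine sum_congr rfl fun j hj => ?_
    rw [← card_filter_card_inter_eq A (mem_Icc.1 hj).2, filter_filter]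
    congr 1
    grind
  · intro B hB
    obtain ⟨hBk, htB⟩ := (mem_filter_univ _).1 hB
    exact mem_Icc.2 ⟨htB, hBk ▸ card_le_card inter_subset_right⟩

theorem card_filter_pairs_le_card_inter (k t : ℕ) :
    #(univ.filter fun p : Finset α × Finset α => #p.1 = k ∧ #p.2 = k ∧ t ≤ #(p.1 ∩ p.2)) =
      (Fintype.card α).choose k *
        ∑ j ∈ Icc t k, hypergeomWeight (Fintype.card α) k j := by
  have hfiber (A : Finset α) :
      #(univ.filter fun B : Finset α => #A = k ∧ #B = k ∧ t ≤ #(A ∩ B)) =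
        if #A = k then ∑ j ∈ Icc t k, hypergeomWeight (Fintype.card α) k j else 0 := by
    split_ifs with hA
    · simp only [hA, true_and]
      rw [card_filter_le_card_inter, hA]
      rfl
    · simp [hA]
  rw [← univ_product_univ, card_filter, sum_product]
  simp_rw [← card_filter, hfiber]
  rw [sum_ite, sum_const_zero, add_zero, sum_const, smul_eq_mul, univ_filter_card_eq,
    card_powersetCard, card_univ]

end Counting

theorem Nat.sub_mul_choose_le_mul_choose_succ {m k r : ℕ} (hrk : r < k) :
    (m - k) * m.choose r ≤ k * m.choose (r + 1) := by
  have hrat : (m - k) * (r + 1) ≤ k * (m - r) := calc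
    (m - k) * (r + 1) ≤ (m - k) * k := Nat.mul_le_mul_left _ hrk
    _ ≤ k * (m - r) := by rw [Nat.mul_comm]; exact Nat.mul_le_mul_left _ (by omega)
  refine Nat.le_of_mul_le_mul_right ?_ r.succ_pos
  calc (m - k) * m.choose r * (r + 1) = (m - k) * (r + 1) * m.choose r := by ring
    _ ≤ k * (m - r) * m.choose r := Nat.mul_le_mul_right _ hrat
    _ = k * m.choose (r + 1) * (r + 1) := by
        rw [mul_assoc k (m.choose _), Nat.choose_succ_right_eq]; ring

theorem Nat.choose_mul_sub_pow_le {m k a b : ℕ} (hab : a ≤ b) (hbk : b ≤ k) :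
    m.choose a * (m - k) ^ (b - a) ≤ m.choose b * k ^ (b - a) := by
  induction b, hab using Nat.le_induction with
  | base => simp
  | succ b hab ih =>
    rw [Nat.sub_add_comm hab, pow_succ, pow_succ]
    calc m.choose a * ((m - k) ^ (b - a) * (m - k))
        = m.choose a * (m - k) ^ (b - a) * (m - k) := by ring
      _ ≤ m.choose b * k ^ (b - a) * (m - k) := Nat.mul_le_mul_right _ (ih (by omega))
      _ = (m - k) * m.choose b * k ^ (b - a) := by ring
      _ ≤ k * m.choose (b + 1) * k ^ (b - a) :=
          Nat.mul_le_mul_right _ (Nat.sub_mul_choose_le_mul_choose_succ hbk)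
      _ = m.choose (b + 1) * (k ^ (b - a) * k) := by ring

theorem sum_mul_sum_le_sum_mul_sum_of_cross_le {ι R : Type*} [CommSemiring R] [PartialOrder R]
    [IsOrderedRing R] {f g : ι → R} {s t : Finset ι} (hst : s ⊆ t)
    (hfg : ∀ i ∈ s, ∀ j ∈ t, j ∉ s → f i * g j ≤ f j * g i) :
    (∑ i ∈ s, f i) * ∑ j ∈ t, g j ≤ (∑ i ∈ s, g i) * ∑ j ∈ t, f j := by
  classical
  rw [← sum_sdiff hst, ← sum_sdiff hst (f := f), mul_add, mul_add,
    mul_comm (∑ i ∈ s, g i) (∑ i ∈ s, f i)]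
  gcongr ?_ + _
  rw [sum_mul_sum, sum_mul_sum]
  refine sum_le_sum fun i hi => sum_le_sum fun j hj => ?_
  rw [mul_comm (g i)]
  exact hfg i hi j (mem_sdiff.1 hj).1 (mem_sdiff.1 hj).2

theorem sum_hypergeomWeight {n k : ℕ} (hkn : k ≤ n) :
    ∑ j ∈ range (k + 1), hypergeomWeight n k j = n.choose k := by
  have h := Nat.add_choose_eq k (n - k) k
  rw [Nat.add_sub_cancel' hkn, Nat.sum_antidiagonal_eq_sum_range_succ_mk] at h
  exact h.symm

theorem sum_binomialWeight {n k : ℕ} (hkn : 2 * k ≤ n) :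
    ∑ j ∈ range (k + 1), binomialWeight n k j = (n - k) ^ k := by
  rw [show n - k = k + (n - 2 * k) by omega, add_pow]
  refine sum_congr rfl fun j _ => ?_
  rw [binomialWeight, Nat.cast_id]
  ring

theorem hypergeomWeight_mul_binomialWeight_le {n k i j : ℕ} (hij : i ≤ j) (hjk : j ≤ k) :
    hypergeomWeight n k j * binomialWeight n k i ≤
      hypergeomWeight n k i * binomialWeight n k j := by
  have key := Nat.choose_mul_sub_pow_le (m := n - k) (Nat.sub_le_sub_left hij k) (Nat.sub_le k i)
  rw [show n - k - k = n - 2 * k by omega, show k - i - (k - j) = j - i by omega] at key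
  have hk : k ^ j = k ^ i * k ^ (j - i) := by rw [← pow_add, Nat.add_sub_cancel' hij]
  have hd : (n - 2 * k) ^ (k - i) = (n - 2 * k) ^ (k - j) * (n - 2 * k) ^ (j - i) := by
    rw [← pow_add, Nat.sub_add_sub_cancel hjk hij]
  simp only [hypergeomWeight, binomialWeight, hk, hd]
  calc _ = k.choose j * k.choose i * k ^ i * (n - 2 * k) ^ (k - j) *
          ((n - k).choose (k - j) * (n - 2 * k) ^ (j - i)) := by ring
    _ ≤ k.choose j * k.choose i * k ^ i * (n - 2 * k) ^ (k - j) *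
          ((n - k).choose (k - i) * k ^ (j - i)) := Nat.mul_le_mul_left _ key
    _ = _ := by ring

theorem sum_hypergeomWeight_mul_le {n k : ℕ} (hkn : 2 * k ≤ n) (t : ℕ) :
    (∑ j ∈ Icc t k, hypergeomWeight n k j) * (n - k) ^ k ≤
      (∑ j ∈ Icc t k, binomialWeight n k j) * n.choose k := by
  rw [← sum_binomialWeight hkn, ← sum_hypergeomWeight (by omega)]
  refine sum_mul_sum_le_sum_mul_sum_of_cross_le (fun j hj => ?_) fun j hj i hi hit => ?_
  · simp only [mem_Icc, mem_range] at hj ⊢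
    omega
  · simp only [mem_Icc, mem_range] at hj hi hit
    exact hypergeomWeight_mul_binomialWeight_le (by omega) hj.2

theorem choose_mul_div_pow_mul_one_sub_div_pow {p q : ℝ} (hq : q ≠ 0) {k j : ℕ} (hjk : j ≤ k) :
    (k.choose j : ℝ) * (p / q) ^ j * (1 - p / q) ^ (k - j) =
      k.choose j * (p ^ j * (q - p) ^ (k - j)) / q ^ k := by
  rw [one_sub_div hq, div_pow, div_pow, ← Nat.add_sub_cancel' hjk, pow_add,
    Nat.add_sub_cancel_left]
  field_simp

/-- The intersection size of two independent uniform `k`-subsets of `{1,…,n}` is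
stochastically dominated by `Bin(k, k/(n-k))`: for every `t`,
`P(|S ∩ S'| ≥ t) ≤ P(Bin(k, k/(n-k)) ≥ t)`. -/
theorem stmt_14 (n k : ℕ) (hk : 0 < k) (hkn : 2 * k ≤ n) (t : ℕ) :
    (((univ : Finset (Finset (Fin n) × Finset (Fin n))).filter
        (fun p => p.1.card = k ∧ p.2.card = k ∧ t ≤ (p.1 ∩ p.2).card)).card : ℝ)
        / ((n.choose k : ℝ)) ^ 2
      ≤ ∑ j ∈ Finset.Icc t k,
          (k.choose j : ℝ) * ((k : ℝ) / ((n : ℝ) - k)) ^ j *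
            (1 - (k : ℝ) / ((n : ℝ) - k)) ^ (k - j) := by
  have hnk : ((n - k : ℕ) : ℝ) = n - k := Nat.cast_sub (by omega)
  have hn2k : ((n - 2 * k : ℕ) : ℝ) = n - k - k := by push_cast [Nat.cast_sub hkn]; ring
  have hq : (0 : ℝ) < n - k := by rw [← hnk]; exact_mod_cast (by omega : 0 < n - k)
  have hC : (0 : ℝ) < n.choose k := by exact_mod_cast Nat.choose_pos (by omega)
  have hLHS : ((#(univ.filter fun p : Finset (Fin n) × Finset (Fin n) =>
        #p.1 = k ∧ #p.2 = k ∧ t ≤ #(p.1 ∩ p.2)) : ℕ) : ℝ) / (n.choose k : ℝ) ^ 2 =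
      ((∑ j ∈ Icc t k, hypergeomWeight n k j : ℕ) : ℝ) / n.choose k := by
    rw [card_filter_pairs_le_card_inter, Fintype.card_fin, Nat.cast_mul]
    field_simp
  have hRHS : ∑ j ∈ Icc t k, (k.choose j : ℝ) * ((k : ℝ) / (n - k)) ^ j *
        (1 - (k : ℝ) / (n - k)) ^ (k - j) =
      ((∑ j ∈ Icc t k, binomialWeight n k j : ℕ) : ℝ) / ((n - k : ℕ) : ℝ) ^ k := by
    rw [Nat.cast_sum, sum_div]
    refine sum_congr rfl fun j hj => ?_
    rw [choose_mul_div_pow_mul_one_sub_div_pow hq.ne' (mem_Icc.1 hj).2, binomialWeight, hnk]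
    push_cast [hn2k]
    ring
  rw [hLHS, hRHS, div_le_div_iff₀ hC (pow_pos (hnk ▸ hq) k)]
  exact_mod_cast sum_hypergeomWeight_mul_le hkn t
end
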